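/- arXiv:0801.3001 — 2 statements merged into one kernel-verified Lean document; each statement's English description precedes it below -/
import Mathlib

section
/- In the permanent linear price impact model with price $p_t = p_{t-1} + \lambda u_t + \epsilon_t$, among all deterministic trading schedules $(u_1,\ldots,u_T)$ with $\sum_{t=1}^T u_t = -x_0$, the expected execution cost $\lambda\big(x_0^2/2 + \tfrac{1}{2}\sum_{t=1}^T u_t^2\big)$ is minimized uniquely by the equipartitioning schedule $u_t = -x_0/T$, giving minimum expected cost $\lambda x_0^2 (T+1)/(2T)$. -/
open Finset

/-! Writing `u t = -x0 / T + d t`, the constraint forces `∑ d t = 0`, so the cross term vanishes and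
`∑ u t ^ 2 = x0 ^ 2 / T + ∑ d t ^ 2`: the cost exceeds its value at equipartition by
`lam / 2 * ∑ d t ^ 2`, which is zero only when every deviation `d t` is. -/

theorem sum_sq_eq_sq_sum_div_card_add_sum_sq_sub_mean {ι K : Type*} [Field K] [CharZero K]
    {s : Finset ι} (hs : s.Nonempty) (f : ι → K) :
    ∑ i ∈ s, f i ^ 2 =
      (∑ i ∈ s, f i) ^ 2 / #s + ∑ i ∈ s, (f i - (∑ j ∈ s, f j) / #s) ^ 2 := by
  set m := (∑ j ∈ s, f j) / #s
  have hcard : (#s : K) ≠ 0 := by exact_mod_cast hs.card_ne_zero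
  have hsum : ∑ j ∈ s, f j = #s * m := by rw [mul_div_cancel₀ _ hcard]
  have hexpand :
      ∑ i ∈ s, (f i - m) ^ 2 = ∑ i ∈ s, f i ^ 2 - 2 * m * ∑ i ∈ s, f i + #s * m ^ 2 := by
    simp only [sub_sq, sum_add_distrib, sum_sub_distrib, mul_sum, sum_const, nsmul_eq_mul]
    congr 2
    exact sum_congr rfl fun i _ => by ring
  rw [hexpand, hsum]
  field_simp
  ring

/-- Among deterministic schedules summing to `-x0`, expected execution cost
`lam*(x0^2/2 + (1/2)∑ u t^2)` is uniquely minimized by equipartitioning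
`u t = -x0/T`, with minimum value `lam*x0^2*(T+1)/(2T)`. -/
theorem equipartition_minimizes_cost
    (T : ℕ) (hT : 1 ≤ T) (lam x0 : ℝ) (hlam : 0 < lam) :
    let cost : (Fin T → ℝ) → ℝ :=
      fun u => lam * (x0 ^ 2 / 2 + (1 / 2) * ∑ t, (u t) ^ 2)
    (∀ u : Fin T → ℝ, (∑ t, u t) = -x0 →
        lam * x0 ^ 2 * (T + 1) / (2 * T) ≤ cost u) ∧
    cost (fun _ => -x0 / T) = lam * x0 ^ 2 * (T + 1) / (2 * T) ∧
    (∀ u : Fin T → ℝ, (∑ t, u t) = -x0 →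
        cost u = lam * x0 ^ 2 * (T + 1) / (2 * T) → u = fun _ => -x0 / T) := by
  intro cost
  have hT0 : (T : ℝ) ≠ 0 := by positivity
  have hcost : ∀ u : Fin T → ℝ, ∑ t, u t = -x0 →
      cost u = lam * x0 ^ 2 * (T + 1) / (2 * T) + lam / 2 * ∑ t, (u t - -x0 / T) ^ 2 := by
    intro u hu
    have hdecomp := sum_sq_eq_sq_sum_div_card_add_sum_sq_sub_mean
      (univ_nonempty_iff.2 ⟨⟨0, hT⟩⟩) u
    rw [hu, card_univ, Fintype.card_fin] at hdecomp
    simp only [cost, hdecomp]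
    field_simp
    ring
  have hconst : ∑ _t : Fin T, -x0 / T = -x0 := by
    rw [sum_const, card_univ, Fintype.card_fin, nsmul_eq_mul, mul_div_cancel₀ _ hT0]
  refine ⟨fun u hu => ?_, ?_, fun u hu hmin => ?_⟩
  · rw [hcost u hu]
    have hdev : 0 ≤ lam / 2 * ∑ t, (u t - -x0 / T) ^ 2 := by positivity
    linarith
  · rw [hcost _ hconst]
    simp
  · rw [hcost u hu, add_eq_left, mul_eq_zero,
      sum_eq_zero_iff_of_nonneg fun t _ => sq_nonneg _] at hmin
    funext t
    rcases hmin with hlam0 | hdev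
    · linarith
    · exact sub_eq_zero.1 (pow_eq_zero_iff two_ne_zero |>.1 (hdev t (mem_univ t)))
end

section
/- An arbitrageur with position $y_{T-1}$ who must liquidate over two periods $T$ and $T+1$ under the price impact model, where the trader sells $-x_{T-1}$ at time $T$ with $x_{T-1}$ distributed according to belief $\phi_{T-1}$ with mean $\mu_{T-1}$, has optimal first trade $v_T^* = -y_{T-1}/2$ and optimal expected profit $V^*_{T-1}(y_{T-1},\phi_{T-1}) = -\lambda(\mu_{T-1} + \tfrac{3}{4} y_{T-1}) y_{T-1}$. -/
/-! The trader's position enters the profit linearly, so by linearity of expectation only its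
mean `m` matters; what remains is the concave quadratic `lam * v * y - lam * (y + v) ^ 2` in the
trade `v`, whose vertex is `-y / 2`. -/

open MeasureTheory

theorem integral_const_mul_add_const {Ω : Type*} [MeasurableSpace Ω] {μ : Measure Ω}
    [IsProbabilityMeasure μ] {x : Ω → ℝ} (hx : Integrable x μ) (a b : ℝ) :
    ∫ ω, (a * x ω + b) ∂μ = a * ∫ ω, x ω ∂μ + b := by
  rw [integral_add (hx.const_mul a) (integrable_const b), integral_const_mul, integral_const,
    probReal_univ, one_smul]

theorem mul_mul_sub_mul_add_sq_eq (lam y v : ℝ) :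
    lam * v * y - lam * (y + v) ^ 2 = -(3 / 4) * lam * y ^ 2 - lam * (v + y / 2) ^ 2 := by
  ring

theorem mul_mul_sub_mul_add_sq_le {lam : ℝ} (hlam : 0 ≤ lam) (y v : ℝ) :
    lam * v * y - lam * (y + v) ^ 2 ≤ lam * (-y / 2) * y - lam * (y + -y / 2) ^ 2 := by
  rw [mul_mul_sub_mul_add_sq_eq, mul_mul_sub_mul_add_sq_eq lam y (-y / 2)]
  nlinarith [mul_nonneg hlam (sq_nonneg (v + y / 2))]

/-- Terminal-stage arbitrageur problem: optimal first trade is `-y/2` with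
optimal expected profit `-lam*(m + (3/4)*y)*y`. -/
theorem arbitrageur_terminal_value
    {Ω : Type*} [MeasurableSpace Ω] (μ : Measure Ω) [IsProbabilityMeasure μ]
    (lam y m : ℝ) (hlam : 0 < lam)
    (x : Ω → ℝ) (hx : Integrable x μ) (hm : ∫ ω, x ω ∂μ = m)
    (h : ℝ → ℝ)
    (hh : ∀ v, h v = ∫ ω, (lam * (-(x ω) + v) * y - lam * (y + v) ^ 2) ∂μ) :
    (∀ v, h v ≤ h (-y / 2)) ∧ h (-y / 2) = -lam * (m + (3 / 4) * y) * y := by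
  have h_eq : ∀ v, h v = -lam * y * m + (lam * v * y - lam * (y + v) ^ 2) := by
    intro v
    rw [hh v, ← hm, ← integral_const_mul_add_const hx]
    congr 1 with ω
    ring
  refine ⟨fun v => ?_, ?_⟩
  · rw [h_eq, h_eq]
    linarith [mul_mul_sub_mul_add_sq_le hlam.le y v]
  · rw [h_eq]
    ring
end
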